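/- arXiv:0905.4044 — 3 statements merged into one kernel-verified Lean document; each statement's English description precedes it below -/
import Mathlib

section
/- A 0-dimensional hypergroupoid is a constant simplicial set, i.e. a set: if X is a simplicial set such that the maps X_m → Hom(Λ^m_k, X) are surjective for all k ≤ m and bijective for all m > 0, then every face and degeneracy map of X is a bijection. -/
open CategoryTheory Simplicial

/-- The (absolute) partial matching map of a simplicial set `X`:
restriction of `m`-simplices to the horn `Λ[m, k]`. -/
def hornRes (X : SSet) (m : ℕ) (k : Fin (m + 1)) : (Δ[m] ⟶ X) → ((Λ[m, k] : SSet) ⟶ X) :=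
  fun g => Λ[m, k].ι ≫ g

/-- An `n`-dimensional hypergroupoid in the sense of Duskin: every horn has a filler,
and fillers of horns `Λ[m, k]` are unique for `m > n`. -/
def IsHypergroupoid (n : ℕ) (X : SSet) : Prop :=
  (∀ (m : ℕ) (k : Fin (m + 1)), Function.Surjective (hornRes X m k)) ∧
    ∀ (m : ℕ) (k : Fin (m + 1)), m > n → Function.Bijective (hornRes X m k)

/-!
For `n > 0`, an `n`-simplex `a` is determined by its horn `Λ[n, 0]`, i.e. by its faces
`d_j a` with `j ≠ 0`. By induction on `n` each such face is the totally degenerate simplex on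
its vertex `0`, which is also vertex `0` of `a`; hence so is `a`. Thus `X_0 → X_n`,
`x ↦ s_0 ⋯ s_0 x`, is a bijection for every `n`, and every simplicial operator commutes with
these bijections.
-/

namespace SSet

open SimplexCategory

variable (X : SSet)

/-- `hg` says that `g` is a simplex of the horn `Λ[m + 1, k]`, so it factors through a face
`δ j` with `j ≠ k`. -/
lemma map_eq_of_δ_eq_of_range_union_ne_univ {m l : ℕ} {k : Fin (m + 2)} {a b : X _⦋m + 1⦌}
    (hab : ∀ j ≠ k, X.map (δ j).op a = X.map (δ j).op b) (g : ⦋l⦌ ⟶ ⦋m + 1⦌)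
    (hg : Set.range g.toOrderHom ∪ {k} ≠ Set.univ) :
    X.map g.op a = X.map g.op b := by
  obtain ⟨j, hj⟩ := (Set.ne_univ_iff_exists_notMem _).1 hg
  simp only [Set.mem_union, Set.mem_range, Set.mem_singleton_iff, not_or, not_exists] at hj
  rw [← factor_δ_spec g j hj.1, op_comp, Functor.map_comp_apply,
    Functor.map_comp_apply, hab j hj.2]

lemma eq_of_δ_eq_of_hornRes_injective {m : ℕ} {k : Fin (m + 2)}
    (hk : Function.Injective (hornRes X (m + 1) k)) {a b : X _⦋m + 1⦌}
    (hab : ∀ j ≠ k, X.map (δ j).op a = X.map (δ j).op b) : a = b := by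
  apply yonedaEquiv.symm.injective
  apply hk
  ext ⟨l⟩ ⟨α, hα⟩
  induction l using SimplexCategory.rec
  exact map_eq_of_δ_eq_of_range_union_ne_univ X hab (stdSimplex.objEquiv α) hα

def constSimplex (n : ℕ) : X _⦋0⦌ → X _⦋n⦌ := X.map (SimplexCategory.const ⦋n⦌ ⦋0⦌ 0).op

def vertexZero (n : ℕ) : X _⦋n⦌ → X _⦋0⦌ := X.map (SimplexCategory.const ⦋0⦌ ⦋n⦌ 0).op

lemma vertexZero_constSimplex (n : ℕ) (x : X _⦋0⦌) : X.vertexZero n (X.constSimplex n x) = x := by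
  rw [vertexZero, constSimplex, ← Functor.map_comp_apply, ← op_comp,
    eq_const_to_zero (_ ≫ _), const_eq_id, op_id, Functor.map_id_apply]

lemma map_constSimplex {l n : ℕ} (f : ⦋l⦌ ⟶ ⦋n⦌) (x : X _⦋0⦌) :
    X.map f.op (X.constSimplex n x) = X.constSimplex l x := by
  rw [constSimplex, constSimplex, ← Functor.map_comp_apply, ← op_comp,
    eq_const_to_zero (f ≫ _), eq_const_to_zero (SimplexCategory.const _ _ _)]

lemma vertexZero_map_δ {n : ℕ} {j : Fin (n + 2)} (hj : j ≠ 0) (a : X _⦋n + 1⦌) :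
    X.vertexZero n (X.map (δ j).op a) = X.vertexZero (n + 1) a := by
  rw [vertexZero, vertexZero, ← Functor.map_comp_apply, ← op_comp, SimplexCategory.const_comp]
  congr
  exact Fin.succAbove_ne_zero_zero hj

variable {X}

lemma constSimplex_vertexZero (hX : ∀ m : ℕ, Function.Injective (hornRes X (m + 1) 0))
    (n : ℕ) (a : X _⦋n⦌) : X.constSimplex n (X.vertexZero n a) = a := by
  induction n with
  | zero =>
    rw [constSimplex, vertexZero, const_eq_id, op_id, Functor.map_id_apply,
      Functor.map_id_apply]
  | succ n ih =>
    refine eq_of_δ_eq_of_hornRes_injective X (hX n) fun j hj => ?_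
    rw [map_constSimplex, ← vertexZero_map_δ X hj, ih]

lemma constSimplex_bijective (hX : ∀ m : ℕ, Function.Injective (hornRes X (m + 1) 0))
    (n : ℕ) : Function.Bijective (X.constSimplex n) :=
  Function.bijective_iff_has_inverse.2
    ⟨X.vertexZero n, X.vertexZero_constSimplex n, constSimplex_vertexZero hX n⟩

lemma map_bijective_of_hornRes_injective
    (hX : ∀ m : ℕ, Function.Injective (hornRes X (m + 1) 0)) {l n : ℕ} (f : ⦋l⦌ ⟶ ⦋n⦌) :
    Function.Bijective (X.map f.op) := by
  have hf : X.map f.op ∘ X.constSimplex n = X.constSimplex l :=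
    funext (X.map_constSimplex f)
  exact (Function.Bijective.of_comp_iff _ (constSimplex_bijective hX n)).1
    (hf ▸ constSimplex_bijective hX l)

end SSet

/-- A `0`-dimensional hypergroupoid is a constant simplicial set: all its face and
degeneracy maps are bijections. -/
theorem stmt1 (X : SSet) (h : IsHypergroupoid 0 X) :
    (∀ (n : ℕ) (i : Fin (n + 2)),
      Function.Bijective (X.map (SimplexCategory.δ i).op)) ∧
    (∀ (n : ℕ) (i : Fin (n + 1)),
      Function.Bijective (X.map (SimplexCategory.σ i).op)) := by
  have hX : ∀ m : ℕ, Function.Injective (hornRes X (m + 1) 0) :=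
    fun m => (h.2 (m + 1) 0 m.succ_pos).1
  exact ⟨fun _ i => SSet.map_bijective_of_hornRes_injective hX (SimplexCategory.δ i),
    fun _ i => SSet.map_bijective_of_hornRes_injective hX (SimplexCategory.σ i)⟩
end

section
/- If f : X → Y is a Kan fibration of simplicial sets and g : Y → Z is a morphism such that g∘f is a relative n-dimensional hypergroupoid, then f is a relative n-dimensional hypergroupoid. -/
open CategoryTheory Simplicial

/-- The target of the relative (partial) matching map of `f : X ⟶ Y` against `i : A ⟶ B`:
the fibre product `Hom(A, X) ×_{Hom(A, Y)} Hom(B, Y)`. -/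
def RelTarget {X Y A B : SSet} (f : X ⟶ Y) (i : A ⟶ B) : Type _ :=
  {p : (A ⟶ X) × (B ⟶ Y) // p.1 ≫ f = i ≫ p.2}

def relMatch {X Y A B : SSet} (f : X ⟶ Y) (i : A ⟶ B) (g : B ⟶ X) : RelTarget f i :=
  ⟨(i ≫ g, g ≫ f), Category.assoc i g f⟩

def IsKanFibration {X Y : SSet} (f : X ⟶ Y) : Prop :=
  ∀ (m : ℕ) (k : Fin (m + 1)), Function.Surjective (relMatch f (SSet.horn m k).ι)

def IsRelHypergroupoid (n : ℕ) {X Y : SSet} (f : X ⟶ Y) : Prop :=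
  IsKanFibration f ∧
    ∀ (m : ℕ) (k : Fin (m + 1)), m > n →
      Function.Bijective (relMatch f (SSet.horn m k).ι)

theorem relMatch_eq_relMatch_iff {X Y A B : SSet} (f : X ⟶ Y) (i : A ⟶ B) (a b : B ⟶ X) :
    relMatch f i a = relMatch f i b ↔ i ≫ a = i ≫ b ∧ a ≫ f = b ≫ f :=
  Subtype.ext_iff.trans Prod.ext_iff

theorem relMatch_injective_of_comp {X Y Z A B : SSet} (f : X ⟶ Y) (g : Y ⟶ Z) (i : A ⟶ B)
    (h : Function.Injective (relMatch (f ≫ g) i)) : Function.Injective (relMatch f i) := by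
  intro a b hab
  obtain ⟨hi, hfab⟩ := (relMatch_eq_relMatch_iff f i a b).mp hab
  apply h
  rw [relMatch_eq_relMatch_iff]
  exact ⟨hi, by rw [← Category.assoc, hfab, Category.assoc]⟩

/-- If `f : X → Y` is a Kan fibration and `g : Y → Z` is such that `g ∘ f` is a relative
`n`-dimensional hypergroupoid, then `f` is a relative `n`-dimensional hypergroupoid. -/
theorem stmt3 (n : ℕ) {X Y Z : SSet} (f : X ⟶ Y) (g : Y ⟶ Z)
    (hf : IsKanFibration f) (hgf : IsRelHypergroupoid n (f ≫ g)) :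
    IsRelHypergroupoid n f :=
  ⟨hf, fun m k hm =>
    ⟨relMatch_injective_of_comp f g _ (hgf.2 m k hm).injective, hf m k⟩⟩
end

section
/- A morphism f : X → Y of simplicial sets is a trivial relative n-dimensional hypergroupoid if and only if the canonical map X → Y ×_{cosk_{n-1}Y} cosk_{n-1}X is an isomorphism and the (n-1)-truncation of f satisfies the surjectivity conditions up to level n-1. -/
open CategoryTheory Simplicial CategoryTheory.Limits

/-- A trivial relative `n`-dimensional hypergroupoid: a trivial Kan fibration whose
relative matching maps are bijective in all levels `m ≥ n`. -/
def IsTrivRelHypergroupoid (n : ℕ) {X Y : SSet} (f : X ⟶ Y) : Prop :=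
  (∀ m : ℕ, Function.Surjective (relMatch f (SSet.boundary m).ι)) ∧
    ∀ m : ℕ, m ≥ n → Function.Bijective (relMatch f (SSet.boundary m).ι)

universe u

set_option synthInstance.maxHeartbeats 400000 in
/-- The canonical morphism `X ⟶ Y ×_{cosk_r Y} cosk_r X` induced by `f` and the unit of
the truncation–coskeleton adjunction. -/
noncomputable def toCoskPullback (r : ℕ) {X Y : SSet.{u}} (f : X ⟶ Y) :
    X ⟶ pullback ((SimplicialObject.cosk r).map f)
      ((SimplicialObject.coskAdj r).unit.app Y) :=
  pullback.lift ((SimplicialObject.coskAdj r).unit.app X) f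
    ((SimplicialObject.coskAdj r).unit.naturality f).symm

/-!
Write `g : X ⟶ P` for `toCoskPullback n f`, where `P = Y ×_{cosk_n Y} cosk_n X`, and
`p : P ⟶ Y` for the second projection, so that `f = g ≫ p`. Truncation to level `n` preserves
the pullback and inverts the unit of `truncation ⊣ cosk`, so `g` is bijective on `k`-simplices
for `k ≤ n`. For `m > n` the truncation of `∂Δ[m] ⟶ Δ[m]` is an isomorphism, so the relative
matching maps of `cosk_n f` at `∂Δ[m]`, hence those of its base change `p`, are bijective.
Since `∂Δ[m]` has dimension `< m`, maps out of it lift uniquely along any `g` that is bijective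
below level `m`; then the relative matching map of `f = g ≫ p` at `∂Δ[m]` is bijective iff `g`
is bijective on `m`-simplices. Induction on `m` gives both implications.
-/

open Function Opposite

lemma section_factorThruImage_comp {C : Type*} [Category C] {X Y : C} (f : X ⟶ Y) [HasImage f]
    [IsSplitEpi (factorThruImage f)] : section_ (factorThruImage f) ≫ f = image.ι f :=
  calc section_ (factorThruImage f) ≫ f
      = section_ (factorThruImage f) ≫ factorThruImage f ≫ image.ι f := by rw [image.fac]
    _ = image.ι f := IsSplitEpi.id_assoc _ _

section RelTarget

variable {X P Y U V W A B : SSet.{u}}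

lemma RelTarget.ext {f : X ⟶ Y} {i : A ⟶ B} {t t' : RelTarget f i} (h₁ : t.1.1 = t'.1.1)
    (h₂ : t.1.2 = t'.1.2) : t = t' :=
  Subtype.ext (Prod.ext h₁ h₂)

lemma RelTarget.comm {f : X ⟶ Y} {i : A ⟶ B} (t : RelTarget f i) : t.1.1 ≫ f = i ≫ t.1.2 :=
  t.2

@[simp]
lemma relMatch_fst (f : X ⟶ Y) (i : A ⟶ B) (v : B ⟶ X) : (relMatch f i v).1.1 = i ≫ v := rfl

@[simp]
lemma relMatch_snd (f : X ⟶ Y) (i : A ⟶ B) (v : B ⟶ X) : (relMatch f i v).1.2 = v ≫ f := rfl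

def RelTarget.postcomp {f : X ⟶ Y} (g : X ⟶ P) {p : P ⟶ Y} (h : g ≫ p = f) (i : A ⟶ B) :
    RelTarget f i → RelTarget p i :=
  fun t => ⟨(t.1.1 ≫ g, t.1.2), by rw [Category.assoc, h, t.comm]⟩

lemma RelTarget.postcomp_relMatch {f : X ⟶ Y} (g : X ⟶ P) {p : P ⟶ Y} (h : g ≫ p = f)
    (i : A ⟶ B) (v : B ⟶ X) :
    RelTarget.postcomp g h i (relMatch f i v) = relMatch p i (v ≫ g) :=
  RelTarget.ext (Category.assoc _ _ _) (by simp [RelTarget.postcomp, h])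

lemma RelTarget.postcomp_bijective {f : X ⟶ Y} (g : X ⟶ P) {p : P ⟶ Y} (h : g ≫ p = f)
    (i : A ⟶ B) (hg : Bijective fun u : A ⟶ X => u ≫ g) :
    Bijective (RelTarget.postcomp g h i) := by
  refine ⟨fun t t' htt' => ?_, fun s => ?_⟩
  · have h₁ : t.1.1 ≫ g = t'.1.1 ≫ g := congrArg (fun r => r.1.1) htt'
    exact RelTarget.ext (hg.1 h₁) (congrArg (fun r => r.1.2) htt')
  · obtain ⟨u, hu : u ≫ g = s.1.1⟩ := hg.2 s.1.1
    refine ⟨⟨(u, s.1.2), ?_⟩, RelTarget.ext hu rfl⟩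
    rw [← h, ← Category.assoc, hu, s.comm]

lemma relMatch_bijective_iff_of_fac {f : X ⟶ Y} (g : X ⟶ P) {p : P ⟶ Y} (h : g ≫ p = f)
    (i : A ⟶ B) (hg : Bijective fun u : A ⟶ X => u ≫ g) (hp : Bijective (relMatch p i)) :
    Bijective (relMatch f i) ↔ Bijective fun v : B ⟶ X => v ≫ g := by
  have hcomm : RelTarget.postcomp g h i ∘ relMatch f i = relMatch p i ∘ (· ≫ g) :=
    funext (RelTarget.postcomp_relMatch g h i)
  rw [← (RelTarget.postcomp_bijective g h i hg).of_comp_iff', hcomm, hp.of_comp_iff']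

lemma relMatch_bijective_of_precomp {f : X ⟶ Y} {i : A ⟶ B}
    (hX : Bijective fun v : B ⟶ X => i ≫ v) (hY : Injective fun v : B ⟶ Y => i ≫ v) :
    Bijective (relMatch f i) := by
  refine ⟨fun v v' h => hX.1 (congrArg (fun r => r.1.1) h), fun t => ?_⟩
  obtain ⟨v, hv : i ≫ v = t.1.1⟩ := hX.2 t.1.1
  refine ⟨v, RelTarget.ext hv (hY ?_)⟩
  simp only [relMatch_snd, ← Category.assoc, hv, t.comm]

lemma relMatch_pullback_snd_bijective (h : U ⟶ V) (k : W ⟶ V) (i : A ⟶ B)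
    (hh : Bijective (relMatch h i)) : Bijective (relMatch (pullback.snd h k) i) := by
  refine ⟨fun v v' hvv' => ?_, fun t => ?_⟩
  · have h₁ : i ≫ v = i ≫ v' := congrArg (fun r => r.1.1) hvv'
    have h₂ : v ≫ pullback.snd h k = v' ≫ pullback.snd h k := congrArg (fun r => r.1.2) hvv'
    refine pullback.hom_ext (hh.1 (RelTarget.ext ?_ ?_)) h₂
    · simp only [relMatch_fst, ← Category.assoc, h₁]
    · simp only [relMatch_snd, Category.assoc, pullback.condition, reassoc_of% h₂]
  · obtain ⟨a, ha⟩ := hh.2 ⟨(t.1.1 ≫ pullback.fst h k, t.1.2 ≫ k), by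
      rw [Category.assoc, pullback.condition, reassoc_of% t.comm]⟩
    have ha₁ : i ≫ a = t.1.1 ≫ pullback.fst h k := congrArg (fun r => r.1.1) ha
    have ha₂ : a ≫ h = t.1.2 ≫ k := congrArg (fun r => r.1.2) ha
    refine ⟨pullback.lift a t.1.2 ha₂, RelTarget.ext ?_ (pullback.lift_snd _ _ _)⟩
    exact pullback.hom_ext (by rw [relMatch_fst, Category.assoc, pullback.lift_fst, ha₁])
      (by rw [relMatch_fst, Category.assoc, pullback.lift_snd, t.comm])

end RelTarget

namespace SSet

lemma comp_bijective_iff_app_bijective {X Z : SSet.{u}} (g : X ⟶ Z) (c : SimplexCategory) :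
    Bijective (fun v : stdSimplex.obj c ⟶ X => v ≫ g) ↔ Bijective (g.app (op c)) := by
  have hfac : (fun v : stdSimplex.obj c ⟶ X => v ≫ g) =
      yonedaEquiv.symm ∘ g.app (op c) ∘ yonedaEquiv := by
    funext v
    exact yonedaEquiv.injective (by simp [yonedaEquiv_comp])
  rw [hfac, EquivLike.comp_bijective, EquivLike.bijective_comp]

lemma isIso_iff_app_bijective {X Z : SSet.{u}} (g : X ⟶ Z) :
    IsIso g ↔ ∀ k : ℕ, Bijective (g.app (op ⦋k⦌)) := by
  simp only [NatTrans.isIso_iff_isIso_app, ← isIso_iff_bijective]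
  exact ⟨fun h k => h _, fun h c => h c.unop.len⟩

noncomputable def invApp {X Z : SSet.{u}} {g : X ⟶ Z} {c : SimplexCategory}
    (hg : Bijective (g.app (op c))) : Z.obj (op c) → X.obj (op c) :=
  (Equiv.ofBijective _ hg).symm

lemma app_invApp {X Z : SSet.{u}} {g : X ⟶ Z} {c : SimplexCategory}
    (hg : Bijective (g.app (op c))) (z : Z.obj (op c)) : g.app (op c) (invApp hg z) = z :=
  (Equiv.ofBijective _ hg).apply_symm_apply z

namespace Subcomplex

open SSet.stdSimplex

variable {N m : ℕ} (A : (Δ[N] : SSet.{u}).Subcomplex)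

lemma len_lt_of_mono [HasDimensionLT A m] {c : SimplexCategory} {σ : c ⟶ ⦋N⦌} [Mono σ]
    (hσ : objEquiv.symm σ ∈ A.obj (op c)) : c.len < m := by
  induction c using SimplexCategory.rec with | _ d
  exact dim_lt_of_nonDegenerate (X := A) ⟨⟨_, hσ⟩, (A.mem_nonDegenerate_iff _).2
    ((mem_nonDegenerate_iff_mono _).2 (by simpa))⟩ m

noncomputable def imageSimplex {b : SimplexCategory} (s : (A : SSet).obj (op b)) :
    (A : SSet).obj (op (Limits.image (objEquiv s.1))) :=
  ⟨objEquiv.symm (image.ι (objEquiv s.1)), by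
    have := isSplitEpi_of_epi (factorThruImage (objEquiv s.1))
    rw [← section_factorThruImage_comp]
    have hs : objEquiv.symm (objEquiv s.1) ∈ A.obj (op b) := by simpa using s.2
    exact A.map (section_ (factorThruImage (objEquiv s.1))).op hs⟩

lemma map_imageSimplex {b : SimplexCategory} (s : (A : SSet).obj (op b)) :
    (A : SSet).map (factorThruImage (objEquiv s.1)).op (A.imageSimplex s) = s :=
  Subtype.ext (objEquiv.injective (image.fac (objEquiv s.1)))

variable [HasDimensionLT A m]

lemma len_image_lt {b : SimplexCategory} (s : (A : SSet).obj (op b)) :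
    (Limits.image (objEquiv s.1)).len < m :=
  A.len_lt_of_mono (A.imageSimplex s).2

section Lift

variable {X Z : SSet.{u}} {g : X ⟶ Z}
  (hg : ∀ c : SimplexCategory, c.len < m → Bijective (g.app (op c)))

/-- A simplex `s` of `A` is a degeneracy of the nondegenerate simplex `A.imageSimplex s`, whose
dimension is `< m`, so that `g` can be inverted there. -/
noncomputable def liftFun (w : (A : SSet) ⟶ Z) {b : SimplexCategory}
    (s : (A : SSet).obj (op b)) : X.obj (op b) :=
  X.map (factorThruImage (objEquiv s.1)).op
    (invApp (hg _ (A.len_image_lt s)) (w.app _ (A.imageSimplex s)))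

lemma liftFun_eq_of_fac (w : (A : SSet) ⟶ Z) {b c : SimplexCategory}
    (s : (A : SSet).obj (op b)) (a : b ⟶ c) (j : c ⟶ ⦋N⦌) [Mono j]
    (hj : objEquiv.symm j ∈ A.obj (op c)) (hs : objEquiv s.1 = a ≫ j) :
    A.liftFun hg w s =
      X.map a.op (invApp (hg c (A.len_lt_of_mono hj)) (w.app _ ⟨_, hj⟩)) := by
  set σ := objEquiv s.1
  have := isSplitEpi_of_epi (factorThruImage σ)
  set r := section_ (factorThruImage σ) ≫ a
  have hr : r ≫ j = image.ι σ := by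
    rw [Category.assoc, ← hs, section_factorThruImage_comp]
  have ha : a = factorThruImage σ ≫ r := by
    rw [← cancel_mono j, Category.assoc, hr, image.fac, hs]
  have hlow : X.map r.op (invApp (hg c (A.len_lt_of_mono hj)) (w.app _ ⟨_, hj⟩)) =
      invApp (hg _ (A.len_image_lt s)) (w.app _ (A.imageSimplex s)) := by
    apply (hg _ (A.len_image_lt s)).1
    rw [app_invApp, NatTrans.naturality_apply, app_invApp]
    exact (NatTrans.naturality_apply w r.op _).symm.trans
      (congrArg _ (Subtype.ext (objEquiv.injective hr)))
  rw [ha, op_comp, Functor.map_comp_apply, hlow]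
  rfl

noncomputable def liftAlong (w : (A : SSet) ⟶ Z) : (A : SSet) ⟶ X where
  app b := TypeCat.ofHom (A.liftFun hg w)
  naturality b b' γ := by
    refine ConcreteCategory.hom_ext _ _ fun s => ?_
    change A.liftFun hg w ((A : SSet).map γ s) = X.map γ (A.liftFun hg w s)
    rw [A.liftFun_eq_of_fac hg w _ (γ.unop ≫ factorThruImage (objEquiv s.1))
      (image.ι (objEquiv s.1)) (A.imageSimplex s).2 (by rw [Category.assoc, image.fac]; rfl),
      op_comp, Functor.map_comp_apply]
    rfl

lemma liftAlong_comp (w : (A : SSet) ⟶ Z) : A.liftAlong hg w ≫ g = w := by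
  refine NatTrans.ext (funext fun b => ConcreteCategory.hom_ext _ _ fun s => ?_)
  change g.app b (X.map _ _) = _
  rw [NatTrans.naturality_apply, app_invApp, ← NatTrans.naturality_apply, map_imageSimplex]

end Lift

lemma comp_injective_of_hasDimensionLT {X Z : SSet.{u}} {g : X ⟶ Z}
    (hg : ∀ c : SimplexCategory, c.len < m → Injective (g.app (op c))) :
    Injective fun u : (A : SSet) ⟶ X => u ≫ g := by
  intro u u' h
  refine NatTrans.ext (funext fun b => ConcreteCategory.hom_ext _ _ fun s => ?_)
  rw [← A.map_imageSimplex s, NatTrans.naturality_apply, NatTrans.naturality_apply]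
  exact congrArg _ ((hg _ (A.len_image_lt s)) (congrArg (fun φ => φ.app _ (A.imageSimplex s)) h))

lemma comp_bijective_of_hasDimensionLT {X Z : SSet.{u}} {g : X ⟶ Z}
    (hg : ∀ c : SimplexCategory, c.len < m → Bijective (g.app (op c))) :
    Bijective fun u : (A : SSet) ⟶ X => u ≫ g :=
  ⟨A.comp_injective_of_hasDimensionLT fun c hc => (hg c hc).1,
    fun w => ⟨A.liftAlong hg w, A.liftAlong_comp hg w⟩⟩

end Subcomplex

end SSet

section Coskeleton

variable (n : ℕ)

lemma cosk_precomp_bijective {A B : SSet.{u}} (i : A ⟶ B)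
    [IsIso ((SimplicialObject.truncation n).map i)] (Z : SSet.{u}) :
    Bijective fun v : B ⟶ (SimplicialObject.cosk n).obj Z => i ≫ v := by
  let e := fun S : SSet.{u} => (SimplicialObject.coskAdj n).homEquiv S
    ((SimplicialObject.truncation n).obj Z)
  have hfac : (fun v : B ⟶ (SimplicialObject.cosk n).obj Z => i ≫ v) =
      e A ∘ (fun φ => (SimplicialObject.truncation n).map i ≫ φ) ∘ (e B).symm := by
    funext v
    simp [e, Adjunction.homEquiv_naturality_left]
  rw [hfac, EquivLike.comp_bijective, EquivLike.bijective_comp]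
  exact (asIso ((SimplicialObject.truncation n).map i)).symm.homFromEquiv.bijective

lemma isIso_truncation_map_boundary_ι {m : ℕ} (hnm : n < m) :
    IsIso ((SimplicialObject.truncation n).map (SSet.boundary.{u} m).ι) := by
  rw [NatTrans.isIso_iff_isIso_app]
  rintro ⟨⟨k, hk⟩⟩
  induction k using SimplexCategory.rec with | _ k
  rw [isIso_iff_bijective]
  refine ⟨Subtype.val_injective, fun x => ⟨⟨x, ?_⟩, rfl⟩⟩
  exact SSet.boundary_obj_eq_univ.{u} k m (lt_of_le_of_lt hk hnm) ▸ Set.mem_univ x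

instance isIso_truncation_map_coskAdj_unit (Z : SSet.{u}) :
    IsIso ((SimplicialObject.truncation n).map ((SimplicialObject.coskAdj n).unit.app Z)) := by
  have : IsIso (SimplicialObject.coskAdj n).counit := SSet.Truncated.cosk_reflective n
  rw [IsIso.eq_inv_of_inv_hom_id ((SimplicialObject.coskAdj n).left_triangle_components Z)]
  infer_instance

instance isIso_truncation_map_toCoskPullback {X Y : SSet.{u}} (f : X ⟶ Y) :
    IsIso ((SimplicialObject.truncation n).map (toCoskPullback n f)) := by
  have : PreservesLimitsOfSize.{0, 0} (SimplicialObject.truncation (C := Type u) n) :=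
    (SimplicialObject.skAdj n).rightAdjoint_preservesLimits
  have : IsIso ((SimplicialObject.truncation n).map (pullback.fst
      ((SimplicialObject.cosk n).map f) ((SimplicialObject.coskAdj n).unit.app Y))) :=
    ((IsPullback.of_hasPullback ((SimplicialObject.cosk n).map f)
      ((SimplicialObject.coskAdj n).unit.app Y)).map
        (SimplicialObject.truncation n)).isIso_fst_of_isIso
  refine IsIso.of_isIso_fac_right (f := (SimplicialObject.truncation n).map (pullback.fst _ _))
    (h := (SimplicialObject.truncation n).map ((SimplicialObject.coskAdj n).unit.app X)) ?_
  rw [← Functor.map_comp, toCoskPullback, pullback.lift_fst]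

end Coskeleton

section Hypergroupoid

variable (n : ℕ) {X Y : SSet.{u}} (f : X ⟶ Y)

lemma toCoskPullback_app_bijective_of_le {k : ℕ} (hk : k ≤ n) :
    Bijective ((toCoskPullback n f).app (op ⦋k⦌)) := by
  rw [← isIso_iff_bijective]
  exact inferInstanceAs
    (IsIso (((SimplicialObject.truncation n).map (toCoskPullback n f)).app (op ⟨⦋k⦌, hk⟩)))

lemma relMatch_pullback_snd_boundary_bijective {m : ℕ} (hnm : n < m) :
    Bijective (relMatch (pullback.snd ((SimplicialObject.cosk n).map f)
      ((SimplicialObject.coskAdj n).unit.app Y)) ∂Δ[m].ι) := by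
  have := isIso_truncation_map_boundary_ι n hnm
  exact relMatch_pullback_snd_bijective _ _ _ (relMatch_bijective_of_precomp
    (cosk_precomp_bijective n _ X) (cosk_precomp_bijective n _ Y).1)

lemma relMatch_boundary_bijective_iff {m : ℕ} (hnm : n < m)
    (hg : ∀ k < m, Bijective ((toCoskPullback n f).app (op ⦋k⦌))) :
    Bijective (relMatch f ∂Δ[m].ι) ↔ Bijective ((toCoskPullback n f).app (op ⦋m⦌)) := by
  rw [relMatch_bijective_iff_of_fac (toCoskPullback n f) (pullback.lift_snd _ _ _) _
    (∂Δ[m].comp_bijective_of_hasDimensionLT fun c hc => hg c.len hc)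
    (relMatch_pullback_snd_boundary_bijective n f hnm), SSet.comp_bijective_iff_app_bijective]

end Hypergroupoid

/-- A morphism `f : X ⟶ Y` of simplicial sets is a trivial relative `(n+1)`-dimensional
hypergroupoid if and only if the canonical map `X → Y ×_{cosk_n Y} cosk_n X` is an
isomorphism and the `n`-truncation of `f` satisfies the surjectivity conditions up to
level `n` (i.e. the relative matching maps are surjective in all levels `m ≤ n`). -/
theorem stmt5 (n : ℕ) {X Y : SSet} (f : X ⟶ Y) :
    IsTrivRelHypergroupoid (n + 1) f ↔
      (IsIso (toCoskPullback n f) ∧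
        ∀ m : ℕ, m ≤ n → Function.Surjective (relMatch f (SSet.boundary m).ι)) := by
  rw [SSet.isIso_iff_app_bijective]
  constructor
  · rintro ⟨hsurj, hbij⟩
    refine ⟨fun k => ?_, fun m _ => hsurj m⟩
    induction k using Nat.strong_induction_on with
    | _ k ih =>
      rcases le_or_gt k n with hk | hk
      · exact toCoskPullback_app_bijective_of_le n f hk
      · exact (relMatch_boundary_bijective_iff n f hk ih).1 (hbij k hk)
  · rintro ⟨hg, hsurj⟩
    have hbij : ∀ m ≥ n + 1, Bijective (relMatch f ∂Δ[m].ι) := fun m hm =>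
      (relMatch_boundary_bijective_iff n f hm fun k _ => hg k).2 (hg m)
    refine ⟨fun m => ?_, hbij⟩
    rcases le_or_gt m n with hm | hm
    exacts [hsurj m hm, (hbij m hm).2]
end
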